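/- The anti-linear involution τ(X) = −conj(X)ᵀ of sl(3,ℂ) commutes with σ, i.e. τ(σ(X)) = σ(τ(X)) for all X ∈ sl(3,ℂ). -/
import Mathlib

open Complex Matrix

noncomputable section

abbrev M3 := Matrix (Fin 3) (Fin 3) ℂ

/-- ε = exp(iπ/3). -/
def eps : ℂ := Complex.exp (Real.pi * Complex.I / 3)

/-- The matrix P with rows (0, ε², 0), (ε⁴, 0, 0), (0, 0, 1). -/
def Pm : M3 := !![0, eps ^ 2, 0; eps ^ 4, 0, 0; 0, 0, 1]

/-- σ(X) = −P Xᵀ P. -/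
def sigmaL (X : M3) : M3 := -(Pm * Xᵀ * Pm)

/-- τ(X) = −conj(X)ᵀ. -/
def tauL (X : M3) : M3 := -Xᴴ

lemma eps_ne : eps ≠ 0 := Complex.exp_ne_zero _

lemma eps6 : eps ^ 6 = 1 := by
  rw [eps, ← Complex.exp_nat_mul]
  have h : (6 : ℕ) * (↑Real.pi * Complex.I / 3) = 2 * ↑Real.pi * Complex.I := by
    push_cast; ring
  rw [h, Complex.exp_two_pi_mul_I]

lemma conj_eps : (starRingEnd ℂ) eps = eps⁻¹ := by
  have h1 : (starRingEnd ℂ) eps * eps = 1 := by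
    rw [eps, ← Complex.exp_conj, ← Complex.exp_add]
    have : (starRingEnd ℂ) (↑Real.pi * Complex.I / 3) + ↑Real.pi * Complex.I / 3 = 0 := by
      simp [map_div₀, _root_.map_mul, Complex.conj_ofReal, Complex.conj_I, map_ofNat]
      ring
    rw [this, Complex.exp_zero]
  exact eq_inv_of_mul_eq_one_left h1

lemma conj_eps2 : (starRingEnd ℂ) (eps ^ 2) = eps ^ 4 := by
  rw [map_pow, conj_eps, inv_pow]
  exact (eq_inv_of_mul_eq_one_left (by rw [← pow_add]; exact eps6)).symm

lemma conj_eps4 : (starRingEnd ℂ) (eps ^ 4) = eps ^ 2 := by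
  rw [map_pow, conj_eps, inv_pow]
  exact (eq_inv_of_mul_eq_one_left (by rw [← pow_add]; exact eps6)).symm

lemma hP : Pmᴴ = Pm := by
  ext i j
  fin_cases i <;> fin_cases j <;>
    simp [Pm, conjTranspose_apply, ← map_pow, conj_eps2, conj_eps4, Matrix.vecHead, Matrix.vecTail]

/-- The anti-linear involution τ commutes with σ on sl(3,ℂ). -/
theorem statement8 :
    ∀ X : M3, X.trace = 0 → tauL (sigmaL X) = sigmaL (tauL X) := by
  intro X _
  have h : Xᵀᴴ = Xᴴᵀ := by ext i j; simp
  simp [tauL, sigmaL, conjTranspose_mul, hP, Matrix.mul_assoc, h]
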